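/- arXiv:1108.5950 — 5 statements merged into one kernel-verified Lean document; each statement's English description precedes it below -/
import Mathlib

section
/- Let x·y be a post-Lie algebra structure on (g,n). Then for all x,y,z: {x,y}·z + {y,z}·x + {z,x}·y = {[x,y],z} + {[y,z],x} + {[z,x],y} + [{x,y},z] + [{y,z},x] + [{z,x},y]. -/
theorem postLie_identity_five
    (k : Type*) [Field k] (V : Type*) [AddCommGroup V] [Module k V]
    (lg ln : V →ₗ[k] V →ₗ[k] V)
    (hg_alt : ∀ x, lg x x = 0)
    (hg_jac : ∀ x y z, lg x (lg y z) + lg y (lg z x) + lg z (lg x y) = 0)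
    (hn_alt : ∀ x, ln x x = 0)
    (hn_jac : ∀ x y z, ln x (ln y z) + ln y (ln z x) + ln z (ln x y) = 0)
    (m : V →ₗ[k] V →ₗ[k] V)
    (h1 : ∀ x y, m x y - m y x = lg x y - ln x y)
    (h2 : ∀ x y z, m (lg x y) z = m x (m y z) - m y (m x z))
    (h3 : ∀ x y z, m x (ln y z) = ln (m x y) z + ln y (m x z)) :
    ∀ x y z : V,
      m (ln x y) z + m (ln y z) x + m (ln z x) y =
        ln (lg x y) z + ln (lg y z) x + ln (lg z x) y +
          lg (ln x y) z + lg (ln y z) x + lg (ln z x) y := by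
  have skew : ∀ a b : V, ln a b = - ln b a := by
    intro a b
    have h := hn_alt (a + b)
    simp [map_add, LinearMap.add_apply, hn_alt] at h
    exact eq_neg_of_add_eq_zero_right h
  have e : ∀ a b : V, m a b = m b a + (lg a b - ln a b) :=
    fun a b => by
    have h := sub_eq_iff_eq_add.mp (h1 a b)
    rw [h]; abel
  have q : ∀ a b c : V, ln (m a b) c = ln (m b a) c + (ln (lg a b) c - ln (ln a b) c) := by
    intro a b c
    rw [e a b]
    simp [map_add, map_sub, LinearMap.add_apply, LinearMap.sub_apply]
  intro x y z
  have j : ln (ln x y) z + ln (ln y z) x + ln (ln z x) y = 0 := by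
    rw [skew (ln x y) z, skew (ln y z) x, skew (ln z x) y,
      ← neg_add, ← neg_add, neg_eq_zero]
    exact hn_jac z x y
  rw [e (ln x y) z, e (ln y z) x, e (ln z x) y,
    h3 z x y, h3 x y z, h3 y z x,
    skew x (m z y), skew y (m x z), skew z (m y x),
    q x y z, q z x y, q y z x]
  have j' : ln (ln x y) z = -(ln (ln y z) x + ln (ln z x) y) := by
    rw [add_assoc] at j
    exact eq_neg_of_add_eq_zero_left j
  rw [j']
  abel
end

section
/- Let x·y be a post-Lie algebra structure on (g,n) with g abelian (i.e., [x,y]=0 for all x,y). Then the product defined by x∘y = -x·y is an LR-structure on n: it satisfies x∘y - y∘x = {x,y}, x∘(y∘z) = y∘(x∘z), and (x∘y)∘z = (x∘z)∘y. -/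
theorem postLie_abelian_g_is_LR
    (k : Type*) [Field k] (V : Type*) [AddCommGroup V] [Module k V]
    (lg ln : V →ₗ[k] V →ₗ[k] V)
    (hg_alt : ∀ x, lg x x = 0)
    (hg_jac : ∀ x y z, lg x (lg y z) + lg y (lg z x) + lg z (lg x y) = 0)
    (hn_alt : ∀ x, ln x x = 0)
    (hn_jac : ∀ x y z, ln x (ln y z) + ln y (ln z x) + ln z (ln x y) = 0)
    (m : V →ₗ[k] V →ₗ[k] V)
    (h1 : ∀ x y, m x y - m y x = lg x y - ln x y)
    (h2 : ∀ x y z, m (lg x y) z = m x (m y z) - m y (m x z))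
    (h3 : ∀ x y z, m x (ln y z) = ln (m x y) z + ln y (m x z)) :
    (∀ x y : V, lg x y = 0) →
      (∀ x y : V, (-(m x y)) - (-(m y x)) = ln x y) ∧
      (∀ x y z : V, -(m x (-(m y z))) = -(m y (-(m x z)))) ∧
      (∀ x y z : V, -(m (-(m x y)) z) = -(m (-(m x z)) y)) := by
  intro hab
  have hln : ∀ x y, ln x y = m y x - m x y := by
    intro x y
    have h := h1 x y
    rw [hab, zero_sub] at h
    rw [← neg_neg (ln x y), ← h, neg_sub]
  have key : ∀ x y z, m x (m y z) = m y (m x z) := by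
    intro x y z
    have h := h2 x y z
    rw [hab, map_zero, LinearMap.zero_apply] at h
    have := sub_eq_zero.mp h.symm
    exact this
  refine ⟨?_, ?_, ?_⟩
  · intro x y
    rw [hln x y]; abel
  · intro x y z
    simp only [map_neg, LinearMap.neg_apply, neg_neg]
    exact key x y z
  · intro x y z
    simp only [map_neg, LinearMap.neg_apply, neg_neg]
    have e := h3 x y z
    rw [hln y z, hln (m x y) z, hln y (m x z), map_sub, key x z y, key x y z] at e
    -- e : m z (m x y) - m y (m x z) = (m z (m x y) - m (m x y) z) + (m (m x z) y - m y (m x z))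
    have h0 : m (m x y) z - m (m x z) y = 0 := by
      have h' := sub_eq_zero.mpr e
      calc m (m x y) z - m (m x z) y
          = (m z (m x y) - m y (m x z)) -
            ((m z (m x y) - m (m x y) z) + (m (m x z) y - m y (m x z))) := by abel
        _ = 0 := h'
    exact sub_eq_zero.mp h0
end

section
/- Let (n,{,}) be a Lie algebra which is a direct vector space sum n = a ⊕ b of two Lie subalgebras a and b. Define a new bracket on the vector space by [a+b, a'+b'] = {a,a'} - {b,b'} for a,a' ∈ a and b,b' ∈ b. Then this bracket satisfies the Jacobi identity (i.e., defines a Lie algebra g), and the product (a+b)·(a'+b') = -{b, a'+b'} defines a post-Lie algebra structure on (g,n). -/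
/-- If a Lie algebra n is a direct vector space sum of two subalgebras a and b, then
[a+b, a'+b'] := {a,a'} - {b,b'} is a Lie bracket, and (a+b)·(a'+b') := -{b, a'+b'}
is a post-Lie algebra structure on (g,n). The decomposition is encoded by linear
projections p, q onto a and b. -/
theorem postLie_from_subalgebra_decomposition
    (k : Type*) [Field k] (N : Type*) [LieRing N] [LieAlgebra k N]
    (A B : LieSubalgebra k N)
    (p q : N →ₗ[k] N)
    (hp : ∀ x, p x ∈ A) (hq : ∀ x, q x ∈ B)
    (hpq : ∀ x, p x + q x = x)
    (hpA : ∀ x ∈ A, p x = x) (hqB : ∀ x ∈ B, q x = x) :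
    -- the new bracket [x,y] = {p x, p y} - {q x, q y}
    (∀ x : N, (⁅p x, p x⁆ - ⁅q x, q x⁆ : N) = 0) ∧
    (∀ x y z : N,
        (⁅p x, p (⁅p y, p z⁆ - ⁅q y, q z⁆)⁆ - ⁅q x, q (⁅p y, p z⁆ - ⁅q y, q z⁆)⁆) +
        (⁅p y, p (⁅p z, p x⁆ - ⁅q z, q x⁆)⁆ - ⁅q y, q (⁅p z, p x⁆ - ⁅q z, q x⁆)⁆) +
        (⁅p z, p (⁅p x, p y⁆ - ⁅q x, q y⁆)⁆ - ⁅q z, q (⁅p x, p y⁆ - ⁅q x, q y⁆)⁆) = 0) ∧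
    -- x·y = -{q x, y} is a post-Lie algebra structure on (g,n)
    (∀ x y : N, (-⁅q x, y⁆) - (-⁅q y, x⁆) = (⁅p x, p y⁆ - ⁅q x, q y⁆) - ⁅x, y⁆) ∧
    (∀ x y z : N,
        -⁅q (⁅p x, p y⁆ - ⁅q x, q y⁆), z⁆ =
          (-⁅q x, -⁅q y, z⁆⁆) - (-⁅q y, -⁅q x, z⁆⁆)) ∧
    (∀ x y z : N, -⁅q x, ⁅y, z⁆⁆ = ⁅-⁅q x, y⁆, z⁆ + ⁅y, -⁅q x, z⁆⁆) := by
  have hqA : ∀ x ∈ A, q x = 0 := fun x hx => by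
    have h := hpq x
    rw [hpA x hx] at h
    exact add_eq_left.mp h
  have hpB : ∀ x ∈ B, p x = 0 := fun x hx => by
    have h := hpq x
    rw [hqB x hx] at h
    exact add_eq_right.mp h
  have hppA : ∀ x y : N, p ⁅p x, p y⁆ = ⁅p x, p y⁆ :=
    fun x y => hpA _ (A.lie_mem (hp x) (hp y))
  have hqpA : ∀ x y : N, q ⁅p x, p y⁆ = 0 :=
    fun x y => hqA _ (A.lie_mem (hp x) (hp y))
  have hpqB : ∀ x y : N, p ⁅q x, q y⁆ = 0 :=
    fun x y => hpB _ (B.lie_mem (hq x) (hq y))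
  have hqqB : ∀ x y : N, q ⁅q x, q y⁆ = ⁅q x, q y⁆ :=
    fun x y => hqB _ (B.lie_mem (hq x) (hq y))
  refine ⟨fun x => by simp, fun x y z => ?_, fun x y => ?_, fun x y z => ?_, fun x y z => ?_⟩
  · simp only [map_sub, hppA, hqpA, hpqB, hqqB, sub_zero, zero_sub, lie_neg, sub_neg_eq_add]
    have e1 : (⁅p x, ⁅p y, p z⁆⁆ + ⁅q x, ⁅q y, q z⁆⁆) + (⁅p y, ⁅p z, p x⁆⁆ + ⁅q y, ⁅q z, q x⁆⁆) +
        (⁅p z, ⁅p x, p y⁆⁆ + ⁅q z, ⁅q x, q y⁆⁆) =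
        (⁅p x, ⁅p y, p z⁆⁆ + ⁅p y, ⁅p z, p x⁆⁆ + ⁅p z, ⁅p x, p y⁆⁆) +
        (⁅q x, ⁅q y, q z⁆⁆ + ⁅q y, ⁅q z, q x⁆⁆ + ⁅q z, ⁅q x, q y⁆⁆) := by abel
    rw [e1, lie_jacobi, lie_jacobi, add_zero]
  · have hx := hpq x
    have hy := hpq y
    have hxy : ⁅x, y⁆ = ⁅p x, p y⁆ + ⁅p x, q y⁆ + ⁅q x, p y⁆ + ⁅q x, q y⁆ := by
      conv_lhs => rw [← hx, ← hy]
      simp only [lie_add, add_lie]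
      abel
    rw [hxy]
    have h1 : ⁅q x, y⁆ = ⁅q x, p y⁆ + ⁅q x, q y⁆ := by
      conv_lhs => rw [← hy]; rw [lie_add]
    have h2 : ⁅q y, x⁆ = ⁅q y, p x⁆ + ⁅q y, q x⁆ := by
      conv_lhs => rw [← hx]; rw [lie_add]
    rw [h1, h2]
    have s1 : ⁅q y, p x⁆ = -⁅p x, q y⁆ := (lie_skew _ _).symm
    have s2 : ⁅q y, q x⁆ = -⁅q x, q y⁆ := (lie_skew _ _).symm
    rw [s1, s2]
    abel
  · rw [map_sub, hqpA, hqqB, zero_sub, neg_lie, neg_neg, lie_lie]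
    simp only [lie_neg, neg_neg, sub_neg_eq_add, sub_eq_add_neg]
  · rw [leibniz_lie (q x) y z]
    simp only [neg_lie, lie_neg, neg_add]
end

section
/- Let g be a Lie algebra over a field of characteristic 0, and for scalars α,β,γ let D(α,β,γ) = {φ ∈ End(g) : αφ([x,y]) = β[φ(x),y] + γ[x,φ(y)] for all x,y}. Then for every δ, D(δ,1,0) = D(0,1,-1) ∩ D(2δ,1,1). -/
/-- The space of (α,β,γ)-derivations of a Lie algebra g. -/
def genDerivations (k : Type*) [Field k] (g : Type*) [LieRing g] [LieAlgebra k g]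
    (α β γ : k) : Set (Module.End k g) :=
  {φ | ∀ x y : g, α • φ ⁅x, y⁆ = β • ⁅φ x, y⁆ + γ • ⁅x, φ y⁆}

/-- Over a field of characteristic zero, D(δ,1,0) = D(0,1,-1) ∩ D(2δ,1,1). -/
theorem genDerivations_delta_one_zero
    (k : Type*) [Field k] [CharZero k]
    (g : Type*) [LieRing g] [LieAlgebra k g] (δ : k) :
    genDerivations k g δ 1 0 =
      genDerivations k g 0 1 (-1) ∩ genDerivations k g (2 * δ) 1 1 := by
  ext φ
  simp only [genDerivations, Set.mem_setOf_eq, Set.mem_inter_iff, one_smul, zero_smul,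
    neg_smul, add_zero]
  constructor
  · intro h
    have key : ∀ x y : g, ⁅x, φ y⁆ = δ • φ ⁅x, y⁆ := by
      intro x y
      have h1 := h y x
      rw [← lie_skew (φ y) x, ← lie_skew y x] at h1
      simp only [map_neg, smul_neg, neg_inj] at h1
      exact h1.symm
    constructor
    · intro x y
      rw [key x y, ← h x y, eq_comm, add_neg_eq_zero]
    · intro x y
      rw [key x y, ← h x y, two_mul, add_smul]
  · rintro ⟨h1, h2⟩ x y
    have e1 := h1 x y
    have e2 := h2 x y
    rw [eq_comm, add_neg_eq_zero] at e1
    rw [← e1] at e2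
    have h2ne : (2 : k) ≠ 0 := two_ne_zero
    have : δ • φ ⁅x, y⁆ = (2:k)⁻¹ • ((2*δ) • φ ⁅x, y⁆) := by
      rw [← mul_smul, ← mul_assoc, inv_mul_cancel₀ h2ne, one_mul]
    rw [this, e2, ← two_smul k, ← mul_smul, inv_mul_cancel₀ h2ne, one_smul]
end

section
/- Let n be a complex semisimple Lie algebra, z ∈ n, λ ∈ ℂ, and suppose x·y = {{z,x},y} + λ{x,y} defines a post-Lie algebra structure on (g,n) for some Lie bracket [,] on the same space. Then the operator ad(z) satisfies ad(z)³ + (2λ+1)ad(z)² + (λ²+λ)ad(z) = 0. Moreover, if λ = 0 then z = 0 (so x·y = 0 and [x,y] = {x,y}), and if λ = -1 then z = 0 (so x·y = -{x,y} and [x,y] = -{x,y}). -/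
/-!
The commutator axiom determines `[x, y] = {z, {x, y}} + (2λ+1) {x, y}`. Substituting this into the
left-action axiom and using that the centre of `n` is trivial gives
`{ad z x, ad z y} = ad z² {x, y} + (2λ+1) ad z {x, y} + (λ²+λ) {x, y}`, whose instance `x = z` is
the cubic relation.

For `λ = 0` the identity reads `{ad z x, ad z y} = ad z² {x, y} + ad z {x, y}`, and `λ = -1` gives
the same identity for `-z`. It forces `ad z³ = -ad z²` and `{ad z² x, ad z y} = 0`, so the image of
`ad z²` lies in the `-1`-eigenspace of `ad z`, which is then an abelian ideal, hence zero. So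
`ad z² = 0` and `ad z` is a homomorphism of brackets; its kernel is an ideal whose complementary
ideal `K` satisfies `ad z K ⊆ ker (ad z)`, which makes `K` abelian. Hence `ad z = 0` and `z = 0`.
-/

namespace LieAlgebra

variable {R L : Type*} [CommRing R] [LieRing L] [LieAlgebra R L]

def adPlusScalarProduct (z : L) (lam : R) (x y : L) : L := ⁅⁅z, x⁆, y⁆ + lam • ⁅x, y⁆

theorem eq_of_adPlusScalarProduct_sub_eq {z : L} {lam : R} (g : L → L → L)
    (h : ∀ x y, adPlusScalarProduct z lam x y - adPlusScalarProduct z lam y x = g x y - ⁅x, y⁆)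
    (x y : L) : g x y = ⁅z, ⁅x, y⁆⁆ + (2 * lam + 1) • ⁅x, y⁆ := by
  have hxy := h x y
  simp only [adPlusScalarProduct] at hxy
  have jacobi := lie_lie z x y
  have skew₁ : ⁅⁅z, y⁆, x⁆ = -⁅x, ⁅z, y⁆⁆ := by rw [← lie_skew]
  have skew₂ : ⁅y, x⁆ = -⁅x, y⁆ := by rw [← lie_skew]
  linear_combination (norm := module) -hxy + jacobi - skew₁ - lam • skew₂

theorem lie_lie_ad_ad_eq_of_postLie {z : L} {lam : R} {g : L → L → L}
    (hg : ∀ x y, g x y = ⁅z, ⁅x, y⁆⁆ + (2 * lam + 1) • ⁅x, y⁆)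
    (h : ∀ x y w, adPlusScalarProduct z lam (g x y) w =
      adPlusScalarProduct z lam x (adPlusScalarProduct z lam y w) -
        adPlusScalarProduct z lam y (adPlusScalarProduct z lam x w))
    (x y w : L) :
    ⁅⁅⁅z, x⁆, ⁅z, y⁆⁆, w⁆ =
      ⁅⁅z, ⁅z, ⁅x, y⁆⁆⁆ + (2 * lam + 1) • ⁅z, ⁅x, y⁆⁆ + (lam ^ 2 + lam) • ⁅x, y⁆, w⁆ := by
  have hxyw := h x y w
  rw [hg x y] at hxyw
  have j₁ := lie_lie ⁅z, x⁆ ⁅z, y⁆ w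
  have j₂ := lie_lie ⁅z, x⁆ y w
  have j₃ := lie_lie x ⁅z, y⁆ w
  have j₄ := lie_lie x y w
  have j₅ : ⁅⁅z, ⁅x, y⁆⁆, w⁆ = ⁅⁅⁅z, x⁆, y⁆, w⁆ + ⁅⁅x, ⁅z, y⁆⁆, w⁆ := by
    rw [← add_lie, ← leibniz_lie]
  simp only [adPlusScalarProduct, lie_add, add_lie, lie_smul, smul_lie,
    smul_add, smul_smul] at hxyw ⊢
  linear_combination (norm := module) -hxyw + j₁ + lam • j₂ + lam • j₃ + lam ^ 2 • j₄ + lam • j₅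

theorem lie_ad_ad_eq_of_postLie [LieModule.IsFaithful R L L] {z : L} {lam : R} {g : L → L → L}
    (hg : ∀ x y, g x y = ⁅z, ⁅x, y⁆⁆ + (2 * lam + 1) • ⁅x, y⁆)
    (h : ∀ x y w, adPlusScalarProduct z lam (g x y) w =
      adPlusScalarProduct z lam x (adPlusScalarProduct z lam y w) -
        adPlusScalarProduct z lam y (adPlusScalarProduct z lam x w))
    (x y : L) :
    ⁅⁅z, x⁆, ⁅z, y⁆⁆ = ⁅z, ⁅z, ⁅x, y⁆⁆⁆ + (2 * lam + 1) • ⁅z, ⁅x, y⁆⁆ + (lam ^ 2 + lam) • ⁅x, y⁆ :=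
  LieModule.ext_of_isFaithful (R := R) L (lie_lie_ad_ad_eq_of_postLie hg h x y)

theorem ad_pow_three_add_smul_add_smul_eq_zero {z : L} (a b : R)
    (h : ∀ x y : L, ⁅⁅z, x⁆, ⁅z, y⁆⁆ = ⁅z, ⁅z, ⁅x, y⁆⁆⁆ + a • ⁅z, ⁅x, y⁆⁆ + b • ⁅x, y⁆) :
    ad R L z ^ 3 + a • ad R L z ^ 2 + b • ad R L z = 0 := by
  ext y
  have hzy := h z y
  simp only [lie_self, zero_lie] at hzy
  simp only [LinearMap.add_apply, LinearMap.smul_apply, LinearMap.zero_apply, pow_succ,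
    pow_zero, Module.End.mul_apply, Module.End.one_apply, ad_apply]
  linear_combination (norm := module) -hzy

def eigenspaceAdIdeal (z : L) (c : R)
    (h : ∀ x : L, ∀ w ∈ (ad R L z).eigenspace c, ⁅⁅z, x⁆, w⁆ = 0) : LieIdeal R L where
  toSubmodule := (ad R L z).eigenspace c
  lie_mem {x w} hw := by
    simp only [Submodule.mem_carrier, SetLike.mem_coe, Module.End.mem_eigenspace_iff,
      ad_apply] at hw ⊢
    rw [leibniz_lie, h x w (Module.End.mem_eigenspace_iff.mpr hw), hw, lie_smul, zero_add]

@[simp]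
theorem mem_eigenspaceAdIdeal {z : L} {c : R} {h} {w : L} :
    w ∈ eigenspaceAdIdeal z c h ↔ ⁅z, w⁆ = c • w :=
  Module.End.mem_eigenspace_iff

theorem HasTrivialRadical.eq_bot_of_forall_lie_eq_zero [HasTrivialRadical R L]
    (I : LieIdeal R L) (h : ∀ u ∈ I, ∀ v ∈ I, ⁅u, v⁆ = 0) : I = ⊥ :=
  (hasTrivialRadical_iff_no_abelian_ideals R L).mp inferInstance I
    ((LieSubmodule.lie_abelian_iff_lie_self_eq_bot I).mpr ((LieSubmodule.lie_eq_bot_iff I I).mpr h))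

section SquareZero

variable {z : L}

theorem ad_cube_eq_neg_ad_sq
    (h : ∀ x y : L, ⁅⁅z, x⁆, ⁅z, y⁆⁆ = ⁅z, ⁅z, ⁅x, y⁆⁆⁆ + ⁅z, ⁅x, y⁆⁆) (x : L) :
    ⁅z, ⁅z, ⁅z, x⁆⁆⁆ = -⁅z, ⁅z, x⁆⁆ := by
  have hzx := h z x
  simp only [lie_self, zero_lie] at hzx
  linear_combination (norm := module) -hzx

theorem lie_ad_sq_ad_eq_zero (h_two : IsUnit (2 : R))
    (h : ∀ x y : L, ⁅⁅z, x⁆, ⁅z, y⁆⁆ = ⁅z, ⁅z, ⁅x, y⁆⁆⁆ + ⁅z, ⁅x, y⁆⁆) (x y : L) :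
    ⁅⁅z, ⁅z, x⁆⁆, ⁅z, y⁆⁆ = 0 := by
  have ad_cube := ad_cube_eq_neg_ad_sq h
  -- apply `ad z` to `h` and expand the left side by the Leibniz rule
  have anti (x y : L) : ⁅⁅z, ⁅z, x⁆⁆, ⁅z, y⁆⁆ + ⁅⁅z, x⁆, ⁅z, ⁅z, y⁆⁆⁆ = 0 := by
    rw [← leibniz_lie, h, lie_add, ad_cube, neg_add_cancel]
  have e₁ := anti ⁅z, x⁆ y
  have e₂ := anti x ⁅z, y⁆
  rw [ad_cube, neg_lie] at e₁
  rw [ad_cube, lie_neg] at e₂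
  rw [← h_two.smul_eq_zero, two_smul]
  linear_combination (norm := module) anti x y - e₁ + e₂

variable (R) in
theorem ad_sq_eq_zero_of_lie_ad_sq_ad_eq_zero [HasTrivialRadical R L]
    (h_cube : ∀ x : L, ⁅z, ⁅z, ⁅z, x⁆⁆⁆ = -⁅z, ⁅z, x⁆⁆)
    (h : ∀ x y : L, ⁅⁅z, ⁅z, x⁆⁆, ⁅z, y⁆⁆ = 0) (x : L) : ⁅z, ⁅z, x⁆⁆ = 0 := by
  have sq_of_mem {w : L} (hw : ⁅z, w⁆ = (-1 : R) • w) : ⁅z, ⁅z, w⁆⁆ = w := by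
    rw [hw, lie_smul, hw, smul_smul]; norm_num
  let J := eigenspaceAdIdeal z (-1 : R) fun x w hw ↦ by
    rw [Module.End.mem_eigenspace_iff, ad_apply] at hw
    rw [← lie_skew, ← sq_of_mem hw, h, neg_zero]
  have hJ : J = ⊥ := HasTrivialRadical.eq_bot_of_forall_lie_eq_zero J fun u hu v hv ↦ by
    rw [mem_eigenspaceAdIdeal] at hu hv
    rw [← sq_of_mem hu, ← h u (-v), lie_neg, hv, neg_one_smul, neg_neg]
  have hx : ⁅z, ⁅z, x⁆⁆ ∈ J := by
    rw [mem_eigenspaceAdIdeal, h_cube, neg_one_smul]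
  rwa [hJ, LieSubmodule.mem_bot] at hx

variable (R) in
theorem eq_zero_of_ad_sq_eq_zero_of_ad_lie [IsSemisimple R L]
    (h_sq : ∀ x : L, ⁅z, ⁅z, x⁆⁆ = 0) (h : ∀ x y : L, ⁅z, ⁅x, y⁆⁆ = ⁅⁅z, x⁆, ⁅z, y⁆⁆) :
    z = 0 := by
  let I := eigenspaceAdIdeal z (0 : R) fun x w hw ↦ by
    rw [Module.End.mem_eigenspace_iff, ad_apply, zero_smul] at hw
    have hxw := leibniz_lie z x w
    rw [h, hw, lie_zero, lie_zero, add_zero] at hxw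
    exact hxw.symm
  have mem_I {w : L} : w ∈ I ↔ ⁅z, w⁆ = 0 := by rw [mem_eigenspaceAdIdeal, zero_smul]
  have eq_zero {w : L} (hI : w ∈ I) (hK : w ∈ Iᶜ) : w = 0 := by
    rw [← LieSubmodule.mem_bot (R := R) (L := L), ← inf_compl_eq_bot (a := I)]
    exact ⟨hI, hK⟩
  -- `⁅I, Iᶜ⁆ ≤ I ⊓ Iᶜ = ⊥` and `ad z` maps everything into `I`, so `Iᶜ` is abelian
  have hK : Iᶜ = ⊥ := HasTrivialRadical.eq_bot_of_forall_lie_eq_zero Iᶜ fun u hu v hv ↦ by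
    have h₁ : ⁅⁅z, u⁆, v⁆ = 0 :=
      eq_zero (lie_mem_left R L I _ v (mem_I.mpr (h_sq u))) (lie_mem_right R L Iᶜ _ v hv)
    have h₂ : ⁅u, ⁅z, v⁆⁆ = 0 :=
      eq_zero (lie_mem_right R L I u _ (mem_I.mpr (h_sq v))) (lie_mem_left R L Iᶜ u _ hu)
    exact eq_zero (mem_I.mpr (by rw [leibniz_lie, h₁, h₂, add_zero]))
      (lie_mem_left R L Iᶜ u v hu)
  have hI : I = ⊤ := by rw [← compl_compl I, hK, compl_bot]
  refine LieModule.ext_of_isFaithful (R := R) L fun w ↦ ?_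
  rw [zero_lie, ← mem_I, hI]
  exact LieSubmodule.mem_top w

theorem eq_zero_of_lie_ad_ad_eq [IsSemisimple R L] (h_two : IsUnit (2 : R))
    (h : ∀ x y : L, ⁅⁅z, x⁆, ⁅z, y⁆⁆ = ⁅z, ⁅z, ⁅x, y⁆⁆⁆ + ⁅z, ⁅x, y⁆⁆) : z = 0 := by
  have h_sq :=
    ad_sq_eq_zero_of_lie_ad_sq_ad_eq_zero R (ad_cube_eq_neg_ad_sq h) (lie_ad_sq_ad_eq_zero h_two h)
  refine eq_zero_of_ad_sq_eq_zero_of_ad_lie R h_sq fun x y ↦ ?_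
  rw [h, h_sq, zero_add]

end SquareZero

end LieAlgebra

theorem postLie_from_ad_plus_scalar_general
    (n : Type*) [LieRing n] [LieAlgebra ℂ n]
    [LieAlgebra.IsSemisimple ℂ n]
    (z : n) (lam : ℂ)
    (lg : n →ₗ[ℂ] n →ₗ[ℂ] n)
    -- the product x·y = {{z,x},y} + λ{x,y} is a post-Lie structure on (g,n)
    (h1 : ∀ x y : n, (⁅⁅z, x⁆, y⁆ + lam • ⁅x, y⁆) - (⁅⁅z, y⁆, x⁆ + lam • ⁅y, x⁆)
        = lg x y - ⁅x, y⁆)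
    (h2 : ∀ x y w : n,
        (⁅⁅z, lg x y⁆, w⁆ + lam • ⁅lg x y, w⁆) =
          (⁅⁅z, x⁆, ⁅⁅z, y⁆, w⁆ + lam • ⁅y, w⁆⁆ + lam • ⁅x, ⁅⁅z, y⁆, w⁆ + lam • ⁅y, w⁆⁆) -
          (⁅⁅z, y⁆, ⁅⁅z, x⁆, w⁆ + lam • ⁅x, w⁆⁆ + lam • ⁅y, ⁅⁅z, x⁆, w⁆ + lam • ⁅x, w⁆⁆)) :
    ((LieAlgebra.ad ℂ n z) ^ 3 + (2 * lam + 1) • (LieAlgebra.ad ℂ n z) ^ 2 +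
        (lam ^ 2 + lam) • (LieAlgebra.ad ℂ n z) = 0) ∧
    (lam = 0 → z = 0 ∧ (∀ x y : n, ⁅⁅z, x⁆, y⁆ + lam • ⁅x, y⁆ = 0) ∧
        (∀ x y : n, lg x y = ⁅x, y⁆)) ∧
    (lam = -1 → z = 0 ∧ (∀ x y : n, ⁅⁅z, x⁆, y⁆ + lam • ⁅x, y⁆ = -⁅x, y⁆) ∧
        (∀ x y : n, lg x y = -⁅x, y⁆)) := by
  have hlg := LieAlgebra.eq_of_adPlusScalarProduct_sub_eq (fun x y ↦ lg x y) h1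
  have key := LieAlgebra.lie_ad_ad_eq_of_postLie hlg h2
  have two_isUnit : IsUnit (2 : ℂ) := two_ne_zero.isUnit
  refine ⟨LieAlgebra.ad_pow_three_add_smul_add_smul_eq_zero _ _ key, ?_, ?_⟩
  · rintro rfl
    obtain rfl : z = 0 :=
      LieAlgebra.eq_zero_of_lie_ad_ad_eq two_isUnit fun x y ↦ by simpa using key x y
    exact ⟨rfl, fun x y ↦ by simp, fun x y ↦ by simpa using hlg x y⟩
  · rintro rfl
    -- for `λ = -1` the identity for `ad z` is the `λ = 0` identity for `ad (-z)`
    obtain rfl : z = 0 := neg_eq_zero.mp <|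
      LieAlgebra.eq_zero_of_lie_ad_ad_eq two_isUnit fun x y ↦ by
        simp only [neg_lie, lie_neg, neg_neg]
        linear_combination (norm := module) key x y
    exact ⟨rfl, fun x y ↦ by simp, fun x y ↦ by rw [hlg x y]; norm_num⟩

/-- Suppose x·y = {{z,x},y} + λ{x,y} is a post-Lie algebra structure on (g,n) with n
complex semisimple, for some Lie bracket [,] = lg on the same space. Then
ad(z)³ + (2λ+1)ad(z)² + (λ²+λ)ad(z) = 0; if λ = 0 then z = 0 (so x·y = 0 and
[x,y] = {x,y}), and if λ = -1 then z = 0 (so x·y = -{x,y} and [x,y] = -{x,y}). -/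
theorem postLie_from_ad_plus_scalar
    (n : Type*) [LieRing n] [LieAlgebra ℂ n] [FiniteDimensional ℂ n]
    [LieAlgebra.IsSemisimple ℂ n]
    (z : n) (lam : ℂ)
    (lg : n →ₗ[ℂ] n →ₗ[ℂ] n)
    (hg_alt : ∀ x, lg x x = 0)
    (hg_jac : ∀ x y w, lg x (lg y w) + lg y (lg w x) + lg w (lg x y) = 0)
    -- the product x·y = {{z,x},y} + λ{x,y} is a post-Lie structure on (g,n)
    (h1 : ∀ x y : n, (⁅⁅z, x⁆, y⁆ + lam • ⁅x, y⁆) - (⁅⁅z, y⁆, x⁆ + lam • ⁅y, x⁆)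
        = lg x y - ⁅x, y⁆)
    (h2 : ∀ x y w : n,
        (⁅⁅z, lg x y⁆, w⁆ + lam • ⁅lg x y, w⁆) =
          (⁅⁅z, x⁆, ⁅⁅z, y⁆, w⁆ + lam • ⁅y, w⁆⁆ + lam • ⁅x, ⁅⁅z, y⁆, w⁆ + lam • ⁅y, w⁆⁆) -
          (⁅⁅z, y⁆, ⁅⁅z, x⁆, w⁆ + lam • ⁅x, w⁆⁆ + lam • ⁅y, ⁅⁅z, x⁆, w⁆ + lam • ⁅x, w⁆⁆))
    (h3 : ∀ x y w : n,
        (⁅⁅z, x⁆, ⁅y, w⁆⁆ + lam • ⁅x, ⁅y, w⁆⁆) =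
          ⁅⁅⁅z, x⁆, y⁆ + lam • ⁅x, y⁆, w⁆ + ⁅y, ⁅⁅z, x⁆, w⁆ + lam • ⁅x, w⁆⁆) :
    ((LieAlgebra.ad ℂ n z) ^ 3 + (2 * lam + 1) • (LieAlgebra.ad ℂ n z) ^ 2 +
        (lam ^ 2 + lam) • (LieAlgebra.ad ℂ n z) = 0) ∧
    (lam = 0 → z = 0 ∧ (∀ x y : n, ⁅⁅z, x⁆, y⁆ + lam • ⁅x, y⁆ = 0) ∧
        (∀ x y : n, lg x y = ⁅x, y⁆)) ∧
    (lam = -1 → z = 0 ∧ (∀ x y : n, ⁅⁅z, x⁆, y⁆ + lam • ⁅x, y⁆ = -⁅x, y⁆) ∧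
        (∀ x y : n, lg x y = -⁅x, y⁆)) :=
  postLie_from_ad_plus_scalar_general n z lam lg h1 h2
end
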